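/- For every integer n ≥ 4, the digraph Γ(n,3) is strongly connected with diameter 3, and dim(Γ(n,3)) = f(n,3). -/

import Mathlib

/-!  Common definitions for weak metric dimension of digraphs.

A digraph is modelled by a vertex type `V` together with an arc relation
`A : V → V → Prop` (simplicity is expressed by `Irreflexive A`). -/

/-- There is a directed walk of length `n` from `x` to `y`. -/
def walkLen {V : Type*} (A : V → V → Prop) : ℕ → V → V → Prop
  | 0 => fun x y => x = y
  | n + 1 => fun x y => ∃ z, A x z ∧ walkLen A n z y

/-- `∂(x,y)`: the length of a shortest directed path from `x` to `y`. -/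
noncomputable def ddist {V : Type*} (A : V → V → Prop) (x y : V) : ℕ :=
  sInf {n | walkLen A n x y}

/-- The two way distance `∂̃(x,y) = (∂(x,y), ∂(y,x))`. -/
noncomputable def twoDist {V : Type*} (A : V → V → Prop) (x y : V) : ℕ × ℕ :=
  (ddist A x y, ddist A y x)

/-- Strong connectivity: any vertex can be reached from any vertex by a directed walk. -/
def IsStronglyConnected {V : Type*} (A : V → V → Prop) : Prop :=
  ∀ x y : V, ∃ n, walkLen A n x y

/-- `S` is a weakly resolving set: distinct vertices have different tuples of
two way distances from the vertices of `S`. -/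
def IsWeaklyResolving {V : Type*} (A : V → V → Prop) (S : Set V) : Prop :=
  ∀ u v : V, (∀ w ∈ S, twoDist A w u = twoDist A w v) → u = v

/-- The weak metric dimension: minimum cardinality of a weakly resolving set. -/
noncomputable def wdim {V : Type*} [Fintype V] (A : V → V → Prop) : ℕ :=
  sInf {k | ∃ S : Finset V, S.card = k ∧ IsWeaklyResolving A ↑S}

/-- The diameter: the maximum of `∂(x,y)` over all ordered pairs of vertices. -/
noncomputable def diam {V : Type*} [Fintype V] (A : V → V → Prop) : ℕ :=
  sSup {m | ∃ x y : V, ddist A x y = m}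

/-- `f(n,d)`: the least positive integer `k` with `k + d^(2k) ≥ n`. -/
noncomputable def fnd (n d : ℕ) : ℕ :=
  sInf {k | 0 < k ∧ n ≤ k + d ^ (2 * k)}

/-- An isomorphism from `(V, A)` onto `(W, B)` exists. -/
def IsIsoTo {V W : Type*} (A : V → V → Prop) (B : W → W → Prop) : Prop :=
  ∃ e : V ≃ W, ∀ x y, A x y ↔ B (e x) (e y)

/-- The digraph of Example 2.3: vertices `v_1, …, v_n` are the elements
`0, …, n-1` of `Fin n` (so `v_i` is `i - 1`). -/
def egArc (n d : ℕ) : Fin n → Fin n → Prop := fun x y =>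
  (x.val = n - 1 ∧ y.val ≤ n - d) ∨
  (x.val ≤ n - d ∧ y.val = n - d + 1) ∨
  (n - d + 1 ≤ x.val ∧ x.val ≤ n - 2 ∧ y.val = x.val + 1)

/-- The `r`-th (0-based) coordinate of the tuple `v_{j+1}` in Construction 2.4;
it lies in `{1, …, d}` and `j = Σ_r (coord r - 1) d^r`. -/
def gcoord (d j r : ℕ) : ℕ := j / d ^ r % d + 1

/-- The arc relation of Construction 2.4, with the `u`-vertices `Fin k` on the left
and the `v`-vertices `Fin m` on the right of the sum. -/
def gammaArcKM (d k : ℕ) {m : ℕ} : Fin k ⊕ Fin m → Fin k ⊕ Fin m → Prop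
  | .inl _, .inl _ => False
  | .inl i, .inr j => gcoord d j.val (2 * i.val) = 1
  | .inr j, .inl i => gcoord d j.val (2 * i.val + 1) = 1
  | .inr j, .inr l => j ≠ l ∧ ∀ r < k,
      gcoord d l.val (2 * r) ≤ gcoord d j.val (2 * r) + 1 ∧
      gcoord d j.val (2 * r + 1) ≤ gcoord d l.val (2 * r + 1) + 1

/-- The arc relation of `Γ̄`: `Γ` of Construction 2.4 together with symmetric arcs
between any two distinct `u`-vertices. -/
def gammaBarArcKM (d k : ℕ) {m : ℕ} : Fin k ⊕ Fin m → Fin k ⊕ Fin m → Prop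
  | .inl i, .inl i' => i ≠ i'
  | x, y => gammaArcKM d k x y

/-- The directed cycle of length `m` on `Fin m`. -/
def cycArc (m : ℕ) [NeZero m] : Fin m → Fin m → Prop := fun x y => y = x + 1

/-- `σ` is an automorphism of the digraph `(V, A)`. -/
def IsDigraphAuto {V : Type*} (A : V → V → Prop) (σ : V ≃ V) : Prop :=
  ∀ a b, A a b ↔ A (σ a) (σ b)

/-- Vertex-transitivity. -/
def IsVertexTransitive {V : Type*} (A : V → V → Prop) : Prop :=
  ∀ x y : V, ∃ σ : V ≃ V, IsDigraphAuto A σ ∧ σ x = y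

/-- Weak distance-transitivity. -/
def IsWeaklyDistanceTransitive {V : Type*} (A : V → V → Prop) : Prop :=
  ∀ x y x' y' : V, twoDist A x y = twoDist A x' y' →
    ∃ σ : V ≃ V, IsDigraphAuto A σ ∧ σ x = x' ∧ σ y = y'

/-- Weak distance-regularity. -/
noncomputable def IsWeaklyDistanceRegular {V : Type*} (A : V → V → Prop) : Prop :=
  ∀ i j : ℕ × ℕ, (∃ a b : V, twoDist A a b = i) → (∃ a b : V, twoDist A a b = j) →
    ∀ x y x' y' : V, twoDist A x y = twoDist A x' y' →
      Set.ncard {z : V | twoDist A x z = i ∧ twoDist A z y = j} =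
      Set.ncard {z : V | twoDist A x' z = i ∧ twoDist A z y' = j}

/-- The complete digraph `K_t`. -/
def Krel (t : ℕ) : Fin t → Fin t → Prop := fun x y => x ≠ y

/-- The null digraph `K̄_t`. -/
def Nrel (t : ℕ) : Fin t → Fin t → Prop := fun _ _ => False

/-- The directed path `P_2` of length `1`. -/
def P2rel : Fin 2 → Fin 2 → Prop := fun x y => x = 0 ∧ y = 1

/-- The digraph `G_1` on `{0,1,2}` with arcs `(0,1),(1,2),(2,1),(2,0)`. -/
def G1rel : Fin 3 → Fin 3 → Prop := fun x y =>
  (x = 0 ∧ y = 1) ∨ (x = 1 ∧ y = 2) ∨ (x = 2 ∧ y = 1) ∨ (x = 2 ∧ y = 0)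

/-- The digraph `G_2` on `{0,1,2}` with arcs `(0,1),(1,0),(1,2),(2,1),(2,0)`. -/
def G2rel : Fin 3 → Fin 3 → Prop := fun x y =>
  (x = 0 ∧ y = 1) ∨ (x = 1 ∧ y = 0) ∨ (x = 1 ∧ y = 2) ∨ (x = 2 ∧ y = 1) ∨ (x = 2 ∧ y = 0)

/-- The generalized lexicographic product `G[H₀, H₁, H₂]` for a digraph `G` on `{0,1,2}`. -/
def glex3 {α β γ : Type*} (G : Fin 3 → Fin 3 → Prop)
    (H0 : α → α → Prop) (H1 : β → β → Prop) (H2 : γ → γ → Prop) :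
    α ⊕ β ⊕ γ → α ⊕ β ⊕ γ → Prop
  | .inl x, .inl y => H0 x y
  | .inl _, .inr (.inl _) => G 0 1
  | .inl _, .inr (.inr _) => G 0 2
  | .inr (.inl _), .inl _ => G 1 0
  | .inr (.inl x), .inr (.inl y) => H1 x y
  | .inr (.inl _), .inr (.inr _) => G 1 2
  | .inr (.inr _), .inl _ => G 2 0
  | .inr (.inr _), .inr (.inl _) => G 2 1
  | .inr (.inr x), .inr (.inr y) => H2 x y

/-- A clique in a digraph: the two way distance between any two distinct
vertices of `S` is `(1,1)`. -/
noncomputable def DClique {V : Type*} (A : V → V → Prop) (S : Set V) : Prop :=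
  ∀ u ∈ S, ∀ v ∈ S, u ≠ v → twoDist A u v = (1, 1)

/-- An independent set in a digraph: no arcs inside `R`. -/
def DIndependent {V : Type*} (A : V → V → Prop) (R : Set V) : Prop :=
  ∀ u ∈ R, ∀ v ∈ R, ¬ A u v


/-! Index the coordinates of a vertex `v` as `x_0(v), …, x_{2k-1}(v)`, so that `u_i` governs
`x_{2i}` and `x_{2i+1}`. An arc `v → w` raises each even coordinate and lowers each odd one by at
most one, and lowering coordinates of `v_j` only decreases `j`, so the lowered vertex still exists.
Lowering the even coordinates one step at a time gives a walk from `u_i` to `v` of length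
`x_{2i}(v)`; for `d = 3` no walk is shorter, because a detour through another `u` already costs
three steps (a potential argument). Symmetrically `∂(v, u_i) = x_{2i+1}(v)`, so the two way
distances from the `u`s recover every coordinate and the `u`s form a weakly resolving set. All
distances lie in `[1, 3]`, so a weakly resolving set `S` separates the `n - |S|` vertices outside
it by at most `9^|S|` patterns; hence `n ≤ |S| + 3^(2|S|)` and `|S| ≥ f(n, 3)`. The diameter `3`
is attained from `u_0` to the vertex with `x_0 = 3`. -/

def ReachWithin {V : Type*} (A : V → V → Prop) (n : ℕ) (x y : V) : Prop :=
  ∃ p ≤ n, walkLen A p x y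

section Digraph

variable {V : Type*} {A : V → V → Prop}

theorem walkLen_add {p q : ℕ} {x y z : V} (hxy : walkLen A p x y) (hyz : walkLen A q y z) :
    walkLen A (p + q) x z := by
  induction p generalizing x with
  | zero =>
    obtain rfl : x = y := hxy
    rwa [Nat.zero_add]
  | succ p ih =>
    obtain ⟨w, hxw, hwy⟩ := hxy
    rw [Nat.add_right_comm]
    exact ⟨w, hxw, ih hwy⟩

theorem potential_le_of_walkLen (φ : V → ℕ) (hφ : ∀ a b, A a b → φ b ≤ φ a + 1) {n : ℕ}
    {x y : V} (h : walkLen A n x y) : φ y ≤ φ x + n := by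
  induction n generalizing x with
  | zero =>
    obtain rfl : x = y := h
    exact Nat.le_refl _
  | succ n ih =>
    obtain ⟨w, hxw, hwy⟩ := h
    have := hφ x w hxw
    have := ih hwy
    omega

theorem walkLen_ddist {x y : V} (h : ∃ n, walkLen A n x y) : walkLen A (ddist A x y) x y :=
  Nat.sInf_mem h

theorem potential_le_ddist (φ : V → ℕ) (hφ : ∀ a b, A a b → φ b ≤ φ a + 1) {x y : V}
    (h : ∃ n, walkLen A n x y) : φ y ≤ φ x + ddist A x y :=
  potential_le_of_walkLen φ hφ (walkLen_ddist h)

theorem eq_of_ddist_eq_zero {x y : V} (h : ∃ n, walkLen A n x y) (h0 : ddist A x y = 0) :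
    x = y := by
  have hw := walkLen_ddist h
  rwa [h0] at hw

namespace ReachWithin

theorem refl (n : ℕ) (x : V) : ReachWithin A n x x := ⟨0, Nat.zero_le n, rfl⟩

theorem of_arc {x y : V} (h : A x y) : ReachWithin A 1 x y := ⟨1, le_rfl, y, h, rfl⟩

theorem trans {n n' : ℕ} {x y z : V} (hxy : ReachWithin A n x y) (hyz : ReachWithin A n' y z) :
    ReachWithin A (n + n') x z :=
  let ⟨p, hp, hwp⟩ := hxy
  let ⟨q, hq, hwq⟩ := hyz
  ⟨p + q, Nat.add_le_add hp hq, walkLen_add hwp hwq⟩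

theorem mono {n n' : ℕ} {x y : V} (h : ReachWithin A n x y) (hn : n ≤ n') :
    ReachWithin A n' x y :=
  let ⟨p, hp, hw⟩ := h
  ⟨p, hp.trans hn, hw⟩

theorem reachable {n : ℕ} {x y : V} (h : ReachWithin A n x y) : ∃ p, walkLen A p x y :=
  let ⟨p, _, hw⟩ := h
  ⟨p, hw⟩

theorem ddist_le {n : ℕ} {x y : V} (h : ReachWithin A n x y) : ddist A x y ≤ n :=
  let ⟨_, hp, hw⟩ := h
  (Nat.sInf_le hw).trans hp

end ReachWithin

theorem ddist_self (x : V) : ddist A x x = 0 := Nat.le_zero.mp (ReachWithin.refl 0 x).ddist_le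

theorem one_le_ddist {x y : V} (h : ∃ n, walkLen A n x y) (hxy : x ≠ y) : 1 ≤ ddist A x y :=
  Nat.one_le_iff_ne_zero.mpr fun h0 => hxy (eq_of_ddist_eq_zero h h0)

theorem isWeaklyResolving_univ (h : IsStronglyConnected A) : IsWeaklyResolving A Set.univ :=
  fun u v huv => by
    have hu := congrArg Prod.fst (huv u (Set.mem_univ u))
    exact eq_of_ddist_eq_zero (h u v) (hu.symm.trans (ddist_self u))

variable [Fintype V]

theorem diam_eq_of_ddist_le {D : ℕ} (hD : ∀ x y, ddist A x y ≤ D) {x₀ y₀ : V}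
    (h : ddist A x₀ y₀ = D) : diam A = D := by
  have hbdd : ∀ b ∈ {m | ∃ x y : V, ddist A x y = m}, b ≤ D := by
    rintro _ ⟨x, y, rfl⟩
    exact hD x y
  exact le_antisymm (csSup_le ⟨D, x₀, y₀, h⟩ hbdd) (le_csSup ⟨D, hbdd⟩ ⟨x₀, y₀, h⟩)

/-- A vertex outside `S` is determined by its two way distances from `S`, which lie in `[1, D]²`. -/
theorem card_le_card_add_pow_of_isWeaklyResolving {D : ℕ} (hD : ∀ x y, ReachWithin A D x y)
    {S : Finset V} (hS : IsWeaklyResolving A ↑S) :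
    Fintype.card V ≤ S.card + (D * D) ^ S.card := by
  classical
  let code : V → S → ℕ × ℕ := fun x w => twoDist A w x
  have hmaps : Set.MapsTo code ↑Sᶜ
      ↑(Fintype.piFinset fun _ : S => Finset.Icc 1 D ×ˢ Finset.Icc 1 D) := by
    intro x hx
    rw [Finset.mem_coe, Fintype.mem_piFinset]
    intro w
    have hwx : (w : V) ≠ x := fun h => Finset.mem_compl.mp hx (h ▸ w.2)
    simp only [code, twoDist, Finset.mem_product, Finset.mem_Icc]
    exact ⟨⟨one_le_ddist (hD _ _).reachable hwx, (hD _ _).ddist_le⟩,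
      ⟨one_le_ddist (hD _ _).reachable hwx.symm, (hD _ _).ddist_le⟩⟩
  have hinj : Set.InjOn code ↑Sᶜ := fun x _ y _ hxy =>
    hS x y fun w hw => congrFun hxy ⟨w, hw⟩
  have hcard := Finset.card_le_card_of_injOn code hmaps hinj
  simp only [Fintype.card_piFinset, Finset.card_product, Nat.card_Icc, Nat.add_sub_cancel,
    Finset.prod_const, Finset.card_univ, Fintype.card_coe, Finset.card_compl] at hcard
  have := S.card_le_univ
  omega

theorem card_le_wdim_add_pow {D : ℕ} (hD : ∀ x y, ReachWithin A D x y) :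
    Fintype.card V ≤ wdim A + (D * D) ^ wdim A := by
  have hne : {k | ∃ S : Finset V, S.card = k ∧ IsWeaklyResolving A ↑S}.Nonempty :=
    ⟨_, Finset.univ, rfl, by
      rw [Finset.coe_univ]
      exact isWeaklyResolving_univ fun x y => (hD x y).reachable⟩
  obtain ⟨S, hS, hres⟩ := Nat.sInf_mem hne
  rw [wdim, ← hS]
  exact card_le_card_add_pow_of_isWeaklyResolving hD hres

theorem wdim_le_card {S : Finset V} (hS : IsWeaklyResolving A ↑S) : wdim A ≤ S.card :=
  Nat.sInf_le ⟨S, rfl, hS⟩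

end Digraph

section Coordinates

variable {d : ℕ}

theorem one_le_gcoord (j r : ℕ) : 1 ≤ gcoord d j r := Nat.le_add_left 1 _

theorem gcoord_le (hd : 0 < d) (j r : ℕ) : gcoord d j r ≤ d := Nat.mod_lt _ hd

theorem gcoord_zero (r : ℕ) : gcoord d 0 r = 1 := by simp [gcoord]

theorem gcoord_zero_right (j : ℕ) : gcoord d j 0 = j % d + 1 := by simp [gcoord]

theorem gcoord_succ (j r : ℕ) : gcoord d j (r + 1) = gcoord d (j / d) r := by
  simp only [gcoord, pow_succ', Nat.div_div_eq_div_mul]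

theorem eq_of_gcoord_eq (hd : 0 < d) {t j l : ℕ} (hj : j < d ^ t) (hl : l < d ^ t)
    (h : ∀ r < t, gcoord d j r = gcoord d l r) : j = l := by
  induction t generalizing j l with
  | zero => simp_all
  | succ t ih =>
    have hmod : j % d = l % d := by
      have := h 0 t.succ_pos
      simp only [gcoord_zero_right] at this
      omega
    have hdiv : j / d = l / d := by
      refine ih ?_ ?_ fun r hr => ?_
      · rwa [Nat.div_lt_iff_lt_mul hd, ← pow_succ]
      · rwa [Nat.div_lt_iff_lt_mul hd, ← pow_succ]
      · rw [← gcoord_succ, ← gcoord_succ]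
        exact h (r + 1) (by omega)
    rw [← Nat.div_add_mod j d, ← Nat.div_add_mod l d, hdiv, hmod]

theorem exists_le_gcoord_eq (hd : 0 < d) (j t : ℕ) (c : ℕ → ℕ)
    (hc : ∀ r < t, 1 ≤ c r ∧ c r ≤ gcoord d j r) :
    ∃ w ≤ j, ∀ r < t, gcoord d w r = c r := by
  induction t generalizing j c with
  | zero => exact ⟨0, Nat.zero_le j, fun r hr => absurd hr (Nat.not_lt_zero r)⟩
  | succ t ih =>
    obtain ⟨w, hwj, hw⟩ := ih (j / d) (fun r => c (r + 1)) fun r hr => by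
      rw [← gcoord_succ]
      exact hc (r + 1) (by omega)
    have hc0 := hc 0 t.succ_pos
    rw [gcoord_zero_right] at hc0
    refine ⟨c 0 - 1 + d * w, ?_, fun r hr => ?_⟩
    · have := Nat.div_add_mod j d
      have := Nat.mul_le_mul_left d hwj
      omega
    · have hdiv : (c 0 - 1 + d * w) / d = w := by
        rw [Nat.add_mul_div_left _ _ hd, Nat.div_eq_of_lt (by have := Nat.mod_lt j hd; omega),
          Nat.zero_add]
      cases r with
      | zero =>
        rw [gcoord_zero_right, Nat.add_mul_mod_self_left,
          Nat.mod_eq_of_lt (by have := Nat.mod_lt j hd; omega)]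
        omega
      | succ r => rw [gcoord_succ, hdiv, hw r (by omega)]

end Coordinates

theorem fnd_spec (n d : ℕ) : 0 < fnd n d ∧ n ≤ fnd n d + d ^ (2 * fnd n d) :=
  Nat.sInf_mem (⟨n + 1, n.succ_pos, by omega⟩ : ∃ k, 0 < k ∧ n ≤ k + d ^ (2 * k))

theorem fnd_le {n d k : ℕ} (hk : 0 < k) (h : n ≤ k + d ^ (2 * k)) : fnd n d ≤ k :=
  Nat.sInf_le ⟨hk, h⟩

theorem le_sub_fnd {n d : ℕ} (h : d + 1 ≤ n) : d ≤ n - fnd n d := by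
  obtain ⟨hk, -⟩ := fnd_spec n d
  by_cases hk1 : fnd n d = 1
  · omega
  · have hprev : fnd n d - 1 ∉ {k | 0 < k ∧ n ≤ k + d ^ (2 * k)} :=
      Nat.notMem_of_lt_sInf (show fnd n d - 1 < fnd n d by omega)
    have hlt := Nat.lt_of_not_le fun hle => hprev ⟨by omega, hle⟩
    have : d ≤ d ^ (2 * (fnd n d - 1)) := Nat.le_self_pow (by omega) d
    omega

section Gamma

variable {d k m : ℕ}

theorem reachWithin_inr_inr_one {j l : Fin m}
    (h : ∀ r < k, gcoord d l (2 * r) ≤ gcoord d j (2 * r) + 1 ∧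
      gcoord d j (2 * r + 1) ≤ gcoord d l (2 * r + 1) + 1) :
    ReachWithin (gammaArcKM d k) 1 (.inr j) (.inr l) := by
  by_cases hjl : j = l
  · subst hjl
    exact .refl 1 _
  · exact .of_arc ⟨hjl, h⟩

theorem exists_fin_gcoord_eq (hd : 0 < d) (j : Fin m) (e o : ℕ → ℕ)
    (he : ∀ r < k, 1 ≤ e r ∧ e r ≤ gcoord d j (2 * r))
    (ho : ∀ r < k, 1 ≤ o r ∧ o r ≤ gcoord d j (2 * r + 1)) :
    ∃ w : Fin m, ∀ r < k, gcoord d w (2 * r) = e r ∧ gcoord d w (2 * r + 1) = o r := by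
  obtain ⟨w, hwj, hw⟩ := exists_le_gcoord_eq hd j.val (2 * k)
    (fun r => if r % 2 = 0 then e (r / 2) else o (r / 2)) fun r hr => by
      obtain ⟨s, rfl | rfl⟩ := Nat.even_or_odd' r
      · simpa using he s (by omega)
      · simpa [Nat.add_mod, Nat.add_div] using ho s (by omega)
  exact ⟨⟨w, hwj.trans_lt j.isLt⟩, fun r hr => ⟨by simpa using hw (2 * r) (by omega),
    by simpa [Nat.add_mod, Nat.add_div] using hw (2 * r + 1) (by omega)⟩⟩

theorem exists_pred_lowerEven (hd : 0 < d) (j : Fin m) : ∃ w : Fin m,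
    ReachWithin (gammaArcKM d k) 1 (.inr w) (.inr j) ∧ ∀ r < k,
      gcoord d w (2 * r) = max (gcoord d j (2 * r) - 1) 1 ∧ gcoord d w (2 * r + 1) = 1 := by
  obtain ⟨w, hw⟩ := exists_fin_gcoord_eq hd j (fun r => max (gcoord d j (2 * r) - 1) 1)
    (fun _ => 1) (fun r _ => by have := one_le_gcoord (d := d) j (2 * r); omega)
    (fun r _ => ⟨le_rfl, one_le_gcoord _ _⟩)
  refine ⟨w, reachWithin_inr_inr_one fun r hr => ?_, hw⟩
  have := hw r hr
  have := one_le_gcoord (d := d) j (2 * r + 1)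
  omega

theorem exists_succ_lowerOdd (hd : 0 < d) (j : Fin m) : ∃ w : Fin m,
    ReachWithin (gammaArcKM d k) 1 (.inr j) (.inr w) ∧ ∀ r < k,
      gcoord d w (2 * r) = 1 ∧ gcoord d w (2 * r + 1) = max (gcoord d j (2 * r + 1) - 1) 1 := by
  obtain ⟨w, hw⟩ := exists_fin_gcoord_eq hd j (fun _ => 1)
    (fun r => max (gcoord d j (2 * r + 1) - 1) 1) (fun r _ => ⟨le_rfl, one_le_gcoord _ _⟩)
    (fun r _ => by have := one_le_gcoord (d := d) j (2 * r + 1); omega)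
  refine ⟨w, reachWithin_inr_inr_one fun r hr => ?_, hw⟩
  have := hw r hr
  have := one_le_gcoord (d := d) j (2 * r)
  omega

theorem reachWithin_inl_inr (hd : 0 < d) (i : Fin k) (j : Fin m) :
    ReachWithin (gammaArcKM d k) (gcoord d j (2 * i)) (.inl i) (.inr j) := by
  suffices key : ∀ c, ∀ j : Fin m, gcoord d j (2 * i) = c + 1 →
      ReachWithin (gammaArcKM d k) (c + 1) (.inl i) (.inr j) by
    have h := one_le_gcoord (d := d) j (2 * i)
    rw [← Nat.sub_add_cancel h]
    exact key _ j (Nat.sub_add_cancel h).symm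
  intro c
  induction c with
  | zero => exact fun j hj => .of_arc hj
  | succ c ih =>
    intro j hj
    obtain ⟨w, hwj, hw⟩ := exists_pred_lowerEven hd j
    exact (ih w (by rw [(hw i i.isLt).1, hj]; omega)).trans hwj

theorem reachWithin_inr_inl (hd : 0 < d) (j : Fin m) (i : Fin k) :
    ReachWithin (gammaArcKM d k) (gcoord d j (2 * i + 1)) (.inr j) (.inl i) := by
  suffices key : ∀ c, ∀ j : Fin m, gcoord d j (2 * i + 1) = c + 1 →
      ReachWithin (gammaArcKM d k) (c + 1) (.inr j) (.inl i) by
    have h := one_le_gcoord (d := d) j (2 * i + 1)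
    rw [← Nat.sub_add_cancel h]
    exact key _ j (Nat.sub_add_cancel h).symm
  intro c
  induction c with
  | zero => exact fun j hj => .of_arc hj
  | succ c ih =>
    intro j hj
    obtain ⟨w, hjw, hw⟩ := exists_succ_lowerOdd hd j
    exact (hjw.trans (ih w (by rw [(hw i i.isLt).2, hj]; omega))).mono (by omega)

theorem reachWithin_inl_inl (hm : 0 < m) (i i' : Fin k) :
    ReachWithin (gammaArcKM d k (m := m)) 2 (.inl i) (.inl i') :=
  let v₀ : Fin m := ⟨0, hm⟩
  (ReachWithin.of_arc (y := .inr v₀) (gcoord_zero _)).trans (.of_arc (gcoord_zero _))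

/-- The route `v_j → v_a → v_b → v_l`, where `v_a` lowers the odd coordinates of `v_j` and `v_b`
the even coordinates of `v_l`; the middle step needs all coordinates to be at most `3`. -/
theorem reachWithin_inr_inr (j l : Fin m) :
    ReachWithin (gammaArcKM 3 k) 3 (.inr j) (.inr l) := by
  obtain ⟨a, hja, ha⟩ := exists_succ_lowerOdd (k := k) three_pos j
  obtain ⟨b, hbl, hb⟩ := exists_pred_lowerEven three_pos l
  have hab : ReachWithin (gammaArcKM 3 k) 1 (.inr a) (.inr b) :=
    reachWithin_inr_inr_one fun r hr => by
      have := ha r hr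
      have := hb r hr
      have := gcoord_le three_pos l (2 * r)
      have := gcoord_le three_pos j (2 * r + 1)
      omega
  exact (hja.trans hab).trans hbl

theorem reachWithin_three (hm : 0 < m) (x y : Fin k ⊕ Fin m) :
    ReachWithin (gammaArcKM 3 k) 3 x y := by
  rcases x with i | j <;> rcases y with i' | l
  · exact (reachWithin_inl_inl hm i i').mono (by norm_num)
  · exact (reachWithin_inl_inr three_pos i l).mono (gcoord_le three_pos _ _)
  · exact (reachWithin_inr_inl three_pos j i').mono (gcoord_le three_pos _ _)
  · exact reachWithin_inr_inr j l

theorem ddist_inl_inr (i : Fin k) (j : Fin m) :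
    ddist (gammaArcKM 3 k) (.inl i) (.inr j) = gcoord 3 j (2 * i) := by
  have hreach := reachWithin_inl_inr three_pos i j
  refine le_antisymm hreach.ddist_le ?_
  let φ : Fin k ⊕ Fin m → ℕ :=
    Sum.elim (fun i' => if i' = i then 0 else 2) (fun w => gcoord 3 w (2 * i))
  have hφ : ∀ a b, gammaArcKM 3 k a b → φ b ≤ φ a + 1 := by
    rintro (a | a) (b | b) hab
    · exact hab.elim
    · have := gcoord_le three_pos b (2 * i)
      have : gcoord 3 b (2 * a) = 1 := hab
      simp only [φ, Sum.elim_inl, Sum.elim_inr]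
      split_ifs with h
      · subst h; omega
      · omega
    · have := one_le_gcoord (d := 3) a (2 * i)
      simp only [φ, Sum.elim_inl, Sum.elim_inr]
      split_ifs <;> omega
    · exact (hab.2 i i.isLt).1
  simpa [φ] using potential_le_ddist φ hφ hreach.reachable

theorem ddist_inr_inl (j : Fin m) (i : Fin k) :
    ddist (gammaArcKM 3 k) (.inr j) (.inl i) = gcoord 3 j (2 * i + 1) := by
  have hreach := reachWithin_inr_inl three_pos j i
  refine le_antisymm hreach.ddist_le ?_
  let ψ : Fin k ⊕ Fin m → ℕ :=
    Sum.elim (fun i' => if i' = i then 3 else 1) (fun w => 3 - gcoord 3 w (2 * i + 1))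
  have hψ : ∀ a b, gammaArcKM 3 k a b → ψ b ≤ ψ a + 1 := by
    rintro (a | a) (b | b) hab
    · exact hab.elim
    · have := one_le_gcoord (d := 3) b (2 * i + 1)
      simp only [ψ, Sum.elim_inl, Sum.elim_inr]
      split_ifs <;> omega
    · have : gcoord 3 a (2 * b + 1) = 1 := hab
      simp only [ψ, Sum.elim_inl, Sum.elim_inr]
      split_ifs with h
      · subst h; omega
      · omega
    · have := (hab.2 i i.isLt).2
      have := gcoord_le three_pos a (2 * i + 1)
      simp only [ψ, Sum.elim_inr]
      omega
  have hpot := potential_le_ddist ψ hψ hreach.reachable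
  simp only [ψ, Sum.elim_inl, Sum.elim_inr, if_true] at hpot
  have := gcoord_le three_pos j (2 * i + 1)
  omega

theorem isWeaklyResolving_inl (hm : 0 < m) (hm3 : m ≤ 3 ^ (2 * k)) :
    IsWeaklyResolving (gammaArcKM 3 k (m := m))
      ↑(Finset.univ.map (Function.Embedding.inl : Fin k ↪ Fin k ⊕ Fin m)) := by
  have hzero : ∀ i x, ddist (gammaArcKM 3 k) (.inl i) x = 0 → x = .inl i := fun i x h =>
    (eq_of_ddist_eq_zero (reachWithin_three hm _ _).reachable h).symm
  intro u v huv
  replace huv : ∀ i, twoDist (gammaArcKM 3 k) (.inl i) u = twoDist _ (.inl i) v :=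
    fun i => huv _ (by simp)
  rcases u with i | j
  · exact (hzero i v ((congrArg Prod.fst (huv i)).symm.trans (ddist_self _))).symm
  rcases v with i | l
  · exact hzero i (.inr j) ((congrArg Prod.fst (huv i)).trans (ddist_self _))
  refine congrArg Sum.inr (Fin.ext (eq_of_gcoord_eq three_pos (j.2.trans_le hm3)
    (l.2.trans_le hm3) fun r hr => ?_))
  obtain ⟨s, rfl | rfl⟩ := Nat.even_or_odd' r
  · simpa [twoDist, ddist_inl_inr] using congrArg Prod.fst (huv ⟨s, by omega⟩)
  · simpa [twoDist, ddist_inr_inl] using congrArg Prod.snd (huv ⟨s, by omega⟩)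

end Gamma

/-- Lemma 2.5(iii). For `n ≥ 4`, the digraph `Γ(n,3)` is strongly
connected with diameter `3` and `dim(Γ(n,3)) = f(n,3)`. -/
theorem gamma_n3_dim (n : ℕ) (hn : 4 ≤ n) :
    IsStronglyConnected (gammaArcKM 3 (fnd n 3) (m := n - fnd n 3)) ∧
    diam (gammaArcKM 3 (fnd n 3) (m := n - fnd n 3)) = 3 ∧
    wdim (gammaArcKM 3 (fnd n 3) (m := n - fnd n 3)) = fnd n 3 := by
  obtain ⟨hk, hkn⟩ := fnd_spec n 3
  have hm : 3 ≤ n - fnd n 3 := le_sub_fnd hn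
  set k := fnd n 3
  set m := n - k
  have hreach : ∀ x y, ReachWithin (gammaArcKM 3 k (m := m)) 3 x y :=
    reachWithin_three (by omega)
  refine ⟨fun x y => (hreach x y).reachable, ?_, ?_⟩
  · refine diam_eq_of_ddist_le (fun x y => (hreach x y).ddist_le)
      (x₀ := .inl ⟨0, hk⟩) (y₀ := .inr ⟨2, by omega⟩) ?_
    rw [ddist_inl_inr]
    simp [gcoord]
  · have hcard := card_le_wdim_add_pow hreach
    norm_num at hcard
    have hw : 0 < wdim (gammaArcKM 3 k (m := m)) := Nat.pos_of_ne_zero fun h0 => by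
      rw [h0] at hcard
      omega
    have hres := isWeaklyResolving_inl (k := k) (m := m) (by omega) (by omega)
    refine le_antisymm ((wdim_le_card hres).trans (by simp)) (fnd_le hw ?_)
    norm_num [pow_mul]
    omega
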